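/- Let W and T be real n×n matrices with W symmetric positive definite and T symmetric positive semidefinite, and let α, β > 0. Then the spectral radius of the TTSCSP iteration matrix is given exactly by ρ(G_{α,β}) = max over the eigenvalues μ of S = W^{-1/2} T W^{-1/2} of |(μ - β)(1 - αμ)| / ((1 + βμ)(α + μ)). -/

import Mathlib

/-!
With `Q = W^{1/2}` we have `W = Q * 1 * Q` and `T = Q * S * Q`. The iteration matrix is built
from the pencil `(W, T)` so that a congruence `(W, T) ↦ (L W R, L T R)` becomes the similarity
`G ↦ R⁻¹ G R`. Hence `G(W, T)` is similar to `G(1, S)` and, diagonalising `S` orthogonally, to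
the diagonal matrix with entries `(μ - β)(1 - αμ) / ((1 + βμ)(α + μ))` over the eigenvalues
`μ ≥ 0` of `S`, whose denominators are positive. The spectral radius is the largest modulus of
those entries.
-/

open Matrix

/-- The positive semidefinite square root of a positive semidefinite matrix (the definition
`Matrix.PosSemidef.sqrt` of the older Mathlib, since removed; restated verbatim). -/
noncomputable def Matrix.PosSemidef.sqrt {n 𝕜 : Type*} [Fintype n] [DecidableEq n] [RCLike 𝕜] [PartialOrder 𝕜]
    {A : Matrix n n 𝕜} (hA : A.PosSemidef) : Matrix n n 𝕜 :=
  hA.1.eigenvectorUnitary.1 * diagonal ((↑) ∘ (√·) ∘ hA.1.eigenvalues) *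
  (star hA.1.eigenvectorUnitary : Matrix n n 𝕜)

open scoped ComplexOrder

namespace Matrix.PosSemidef

variable {n 𝕜 : Type*} [Fintype n] [DecidableEq n] [RCLike 𝕜] {A : Matrix n n 𝕜}

lemma sqrt_mul_self (hA : A.PosSemidef) : hA.sqrt * hA.sqrt = A := by
  have hsq : ∀ i, (√(hA.1.eigenvalues i) : 𝕜) * √(hA.1.eigenvalues i) = hA.1.eigenvalues i :=
    fun i => by rw [← RCLike.ofReal_mul, Real.mul_self_sqrt (hA.eigenvalues_nonneg i)]
  conv_rhs => rw [hA.1.spectral_theorem]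
  simp only [sqrt, ← Unitary.conjStarAlgAut_apply (S := 𝕜), ← map_mul, diagonal_mul_diagonal]
  exact congrArg _ (congrArg diagonal (funext hsq))

lemma posSemidef_sqrt (hA : A.PosSemidef) : hA.sqrt.PosSemidef := by
  have hD : (diagonal ((↑) ∘ (√·) ∘ hA.1.eigenvalues : n → 𝕜)).PosSemidef :=
    PosSemidef.diagonal fun i => by simp [Real.sqrt_nonneg]
  simpa only [sqrt, star_eq_conjTranspose] using
    hD.mul_mul_conjTranspose_same (hA.1.eigenvectorUnitary : Matrix n n 𝕜)

end Matrix.PosSemidef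

noncomputable def ttscspIterationMatrix {n K : Type*} [Fintype n] [DecidableEq n] [Field K]
    (α β : K) (W T : Matrix n n K) : Matrix n n K :=
  (W + β • T)⁻¹ * (T - β • W) * (α • W + T)⁻¹ * (W - α • T)

section Iteration

variable {n K : Type*} [Fintype n] [DecidableEq n] [Field K]

lemma Matrix.inv_diagonal_of_ne_zero {v : n → K} (hv : ∀ i, v i ≠ 0) :
    (diagonal v)⁻¹ = diagonal v⁻¹ :=
  inv_eq_right_inv <| by
    rw [diagonal_mul_diagonal, ← diagonal_one]
    exact congrArg diagonal (funext fun i => mul_inv_cancel₀ (hv i))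

lemma ttscspIterationMatrix_congr (α β : K) {L R : Matrix n n K} (hL : IsUnit L.det)
    (hR : IsUnit R.det) (W T : Matrix n n K) :
    ttscspIterationMatrix α β (L * W * R) (L * T * R) =
      R⁻¹ * ttscspIterationMatrix α β W T * R := by
  have hcomb : ∀ a b : K, a • (L * W * R) + b • (L * T * R) = L * (a • W + b • T) * R := by
    intro a b
    simp only [mul_add, add_mul, mul_smul_comm, smul_mul_assoc]
  have h1 := hcomb 1 β
  have h2 := hcomb (-β) 1
  have h3 := hcomb α 1
  have h4 := hcomb 1 (-α)
  simp only [one_smul, neg_smul, ← sub_eq_neg_add, ← sub_eq_add_neg] at h1 h2 h3 h4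
  rw [ttscspIterationMatrix, ttscspIterationMatrix, h1, h2, h3, h4]
  simp only [Matrix.mul_inv_rev, mul_assoc, nonsing_inv_mul_cancel_left _ _ hL,
    mul_nonsing_inv_cancel_left _ _ hR]

lemma ttscspIterationMatrix_one_diagonal (α β : K) (d : n → K) (hβ : ∀ i, 1 + β * d i ≠ 0)
    (hα : ∀ i, α + d i ≠ 0) :
    ttscspIterationMatrix α β 1 (diagonal d) =
      diagonal fun i => (d i - β) * (1 - α * d i) / ((1 + β * d i) * (α + d i)) := by
  have hdiag : ∀ a b : K,
      a • (1 : Matrix n n K) + b • diagonal d = diagonal fun i => a + b * d i := by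
    intro a b
    ext i j
    by_cases h : i = j <;> simp [h]
  have h1 := hdiag 1 β
  have h2 := hdiag (-β) 1
  have h3 := hdiag α 1
  have h4 := hdiag 1 (-α)
  simp only [one_smul, neg_smul, one_mul, neg_mul, ← sub_eq_neg_add, ← sub_eq_add_neg]
    at h1 h2 h3 h4
  rw [ttscspIterationMatrix, h1, h2, h3, h4, inv_diagonal_of_ne_zero hβ,
    inv_diagonal_of_ne_zero hα, diagonal_mul_diagonal, diagonal_mul_diagonal,
    diagonal_mul_diagonal]
  congr 1
  funext i
  simp only [Pi.inv_apply]
  field_simp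

end Iteration

section Congruence

variable {n 𝕜 : Type*} [Fintype n] [DecidableEq n] [RCLike 𝕜] {W T : Matrix n n 𝕜}

lemma Matrix.PosDef.isUnit_det_sqrt (hW : W.PosDef) : IsUnit hW.posSemidef.sqrt.det := by
  refine isUnit_of_mul_isUnit_left (y := hW.posSemidef.sqrt.det) ?_
  rw [← det_mul, hW.posSemidef.sqrt_mul_self]
  exact (isUnit_iff_isUnit_det W).mp hW.isUnit

lemma Matrix.PosSemidef.inv_sqrt_mul_mul_inv_sqrt (hT : T.PosSemidef) (hW : W.PosDef) :
    (hW.posSemidef.sqrt⁻¹ * T * hW.posSemidef.sqrt⁻¹).PosSemidef := by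
  have h := hT.conjTranspose_mul_mul_same hW.posSemidef.sqrt⁻¹
  rwa [hW.posSemidef.posSemidef_sqrt.isHermitian.inv.eq] at h

lemma ttscspIterationMatrix_eq_conj_inv_sqrt (α β : 𝕜) (hW : W.PosDef) :
    ttscspIterationMatrix α β W T = hW.posSemidef.sqrt⁻¹ *
      ttscspIterationMatrix α β 1 (hW.posSemidef.sqrt⁻¹ * T * hW.posSemidef.sqrt⁻¹) *
        hW.posSemidef.sqrt := by
  set Q := hW.posSemidef.sqrt
  have hQ : IsUnit Q.det := hW.isUnit_det_sqrt
  have hWQ : Q * 1 * Q = W := by rw [mul_one, hW.posSemidef.sqrt_mul_self]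
  have hTQ : Q * (Q⁻¹ * T * Q⁻¹) * Q = T := by
    simp only [mul_assoc, nonsing_inv_mul _ hQ, mul_one, mul_nonsing_inv_cancel_left _ _ hQ]
  rw [← ttscspIterationMatrix_congr α β hQ hQ, hWQ, hTQ]

end Congruence

lemma ENNReal.ofReal_iSup {ι : Type*} [Finite ι] (f : ι → ℝ) :
    ENNReal.ofReal (⨆ i, f i) = ⨆ i, ENNReal.ofReal (f i) := by
  cases isEmpty_or_nonempty ι
  · simp [Real.iSup_of_isEmpty]
  · exact Monotone.map_ciSup_of_continuousAt ENNReal.continuous_ofReal.continuousAt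
      ENNReal.ofReal_mono (Set.finite_range f).bddAbove

lemma spectralRadius_map_ofReal_conj_diagonal {n : Type*} [Fintype n] [DecidableEq n]
    {P : Matrix n n ℝ} (hP : IsUnit P.det) (e : n → ℝ) :
    spectralRadius ℂ ((P⁻¹ * diagonal e * P).map Complex.ofReal) =
      ⨆ i, ENNReal.ofReal |e i| := by
  let φ : Matrix n n ℝ →+* Matrix n n ℂ := Complex.ofRealHom.mapMatrix
  let u := (nonsingInvUnit P hP).map φ.toMonoidHom
  have hmap : (P⁻¹ * diagonal e * P).map Complex.ofReal =
      (↑u⁻¹ : Matrix n n ℂ) * diagonal (fun i => (e i : ℂ)) * (u : Matrix n n ℂ) := by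
    change φ (P⁻¹ * diagonal e * P) = φ P⁻¹ * diagonal _ * φ P
    rw [map_mul, map_mul]
    congr 2
    exact diagonal_map (map_zero _)
  rw [hmap, spectralRadius, spectrum.units_conjugate', spectrum_diagonal, iSup_range]
  simp only [Complex.nnnorm_real, ← enorm_eq_nnnorm, Real.enorm_eq_ofReal_abs]

lemma Matrix.IsHermitian.ttscspIterationMatrix_one_eq_conj_diagonal {n : Type*} [Fintype n]
    [DecidableEq n] {S : Matrix n n ℝ} (hS : S.IsHermitian) (α β : ℝ)
    (hβ : ∀ i, 1 + β * hS.eigenvalues i ≠ 0) (hα : ∀ i, α + hS.eigenvalues i ≠ 0) :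
    ∃ P : Matrix n n ℝ, IsUnit P.det ∧ ttscspIterationMatrix α β 1 S =
      P⁻¹ * diagonal (fun i => (hS.eigenvalues i - β) * (1 - α * hS.eigenvalues i) /
        ((1 + β * hS.eigenvalues i) * (α + hS.eigenvalues i))) * P := by
  set U : Matrix n n ℝ := ↑hS.eigenvectorUnitary
  have hUU : U * star U = 1 := mem_unitaryGroup_iff.mp hS.eigenvectorUnitary.2
  have hSU : S = U * diagonal hS.eigenvalues * star U := by
    simpa only [Unitary.conjStarAlgAut_apply, RCLike.ofReal_real_eq_id, Function.id_comp]
      using hS.spectral_theorem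
  have hUU' : star U * U = 1 := mem_unitaryGroup_iff'.mp hS.eigenvectorUnitary.2
  refine ⟨star U, isUnit_det_of_right_inverse hUU', ?_⟩
  rw [← ttscspIterationMatrix_one_diagonal α β _ hβ hα, ← ttscspIterationMatrix_congr α β
    (isUnit_det_of_right_inverse hUU) (isUnit_det_of_left_inverse hUU), mul_one, hUU, ← hSU]

theorem ttscsp_spectral_radius_formula_general
    {n : ℕ}
    (W T : Matrix (Fin n) (Fin n) ℝ)
    (hW : W.PosDef) (hT : T.PosSemidef)
    (S : Matrix (Fin n) (Fin n) ℝ)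
    (hSdef : S = (hW.posSemidef.sqrt)⁻¹ * T * (hW.posSemidef.sqrt)⁻¹)
    (hS : S.IsHermitian)
    (α β : ℝ) (hα : 0 < α) (hβ : 0 < β) :
    spectralRadius ℂ
        (((W + β • T)⁻¹ * (T - β • W) * (α • W + T)⁻¹ * (W - α • T)).map Complex.ofReal) =
      ENNReal.ofReal (⨆ i,
        |(hS.eigenvalues i - β) * (1 - α * hS.eigenvalues i)| /
          ((1 + β * hS.eigenvalues i) * (α + hS.eigenvalues i))) := by
  have hSpsd : S.PosSemidef := hSdef ▸ hT.inv_sqrt_mul_mul_inv_sqrt hW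
  have hden₁ : ∀ i, 0 < 1 + β * hS.eigenvalues i := fun i => by
    nlinarith [hSpsd.eigenvalues_nonneg i]
  have hden₂ : ∀ i, 0 < α + hS.eigenvalues i := fun i => by
    nlinarith [hSpsd.eigenvalues_nonneg i]
  obtain ⟨P, hP, hGS⟩ := hS.ttscspIterationMatrix_one_eq_conj_diagonal α β
    (fun i => (hden₁ i).ne') (fun i => (hden₂ i).ne')
  set e : Fin n → ℝ := fun i => (hS.eigenvalues i - β) * (1 - α * hS.eigenvalues i) /
    ((1 + β * hS.eigenvalues i) * (α + hS.eigenvalues i))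
  have hG : ttscspIterationMatrix α β W T =
      (P * hW.posSemidef.sqrt)⁻¹ * diagonal e * (P * hW.posSemidef.sqrt) := by
    rw [ttscspIterationMatrix_eq_conj_inv_sqrt α β hW, ← hSdef, hGS, Matrix.mul_inv_rev]
    simp only [mul_assoc]
  have hPQ : IsUnit (P * hW.posSemidef.sqrt).det := by
    rw [det_mul]
    exact hP.mul hW.isUnit_det_sqrt
  change spectralRadius ℂ ((ttscspIterationMatrix α β W T).map Complex.ofReal) = _
  rw [hG, spectralRadius_map_ofReal_conj_diagonal hPQ, ENNReal.ofReal_iSup]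
  congr 1
  funext i
  rw [abs_div, abs_of_pos (mul_pos (hden₁ i) (hden₂ i))]

/-- **Exact spectral radius formula.** For `α, β > 0`, the spectral radius of the TTSCSP
iteration matrix equals the maximum over the eigenvalues `μ` of `S = W^{-1/2} T W^{-1/2}`
of `|(μ - β)(1 - αμ)| / ((1 + βμ)(α + μ))`. -/
theorem ttscsp_spectral_radius_formula
    {n : ℕ} (hn : 0 < n)
    (W T : Matrix (Fin n) (Fin n) ℝ)
    (hW : W.PosDef) (hT : T.PosSemidef)
    (S : Matrix (Fin n) (Fin n) ℝ)
    (hSdef : S = (hW.posSemidef.sqrt)⁻¹ * T * (hW.posSemidef.sqrt)⁻¹)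
    (hS : S.IsHermitian)
    (α β : ℝ) (hα : 0 < α) (hβ : 0 < β) :
    spectralRadius ℂ
        (((W + β • T)⁻¹ * (T - β • W) * (α • W + T)⁻¹ * (W - α • T)).map Complex.ofReal) =
      ENNReal.ofReal (⨆ i,
        |(hS.eigenvalues i - β) * (1 - α * hS.eigenvalues i)| /
          ((1 + β * hS.eigenvalues i) * (α + hS.eigenvalues i))) :=
  ttscsp_spectral_radius_formula_general W T hW hT S hSdef hS α β hα hβ
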